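/- Let V be a Hilbert space, K : V → V bounded with I + K invertible, and P the orthogonal projection onto a closed subspace W. Assume a second norm ‖·‖₁ on a dense subspace of V, and suppose there are constants C_a > 0, h > 0, C_op > 0 such that (i) ‖(I-P)w‖ ≤ C_a h ‖w‖₁ for all w in that subspace, and (ii) the range of K(I+K)⁻¹ lies in that subspace and ‖K (I+K)⁻¹ v‖₁ ≤ C_op ‖v‖ for all v ∈ V. If C_a h C_op ≤ 1/2, then I + P∘K is invertible, and for every f ∈ V the Galerkin solution v_N ∈ W of (I + P∘K)v_N = Pf satisfies ‖v - v_N‖ ≤ 2‖(I+K)⁻¹‖ · inf_{w∈W}‖v - w‖, where v = (I+K)⁻¹f. -/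

import Mathlib

open ContinuousLinearMap

/-- The orthogonal projection of `V` onto the closed subspace `W`, as an operator `V →L[ℂ] V`. -/
noncomputable def galerkinProj {V : Type*} [NormedAddCommGroup V] [InnerProductSpace ℂ V]
    (W : Submodule ℂ V) [CompleteSpace W] : V →L[ℂ] V :=
  W.subtypeL ∘L W.orthogonalProjection

theorem hBEM_quasi_optimality_from_approximation_and_smoothing
    {V : Type*} [NormedAddCommGroup V] [InnerProductSpace ℂ V] [CompleteSpace V]
    (K : V →L[ℂ] V) (W : Submodule ℂ V) [CompleteSpace W]
    (J : V →L[ℂ] V) (hJ1 : (1 + K) ∘L J = 1) (hJ2 : J ∘L (1 + K) = 1)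
    -- the dense subspace `V₁` (modeling `H¹(Γ)`) with its stronger norm `n1`
    (V₁ : Submodule ℂ V) (hdense : Dense (V₁ : Set V)) (n1 : V₁ → ℝ)
    (Ca h Cop : ℝ) (hCa : 0 < Ca) (hh : 0 < h) (hCop : 0 < Cop)
    -- (i) the approximation property of the boundary-element space `W`
    (happrox : ∀ w : V₁, ‖((1 : V →L[ℂ] V) - galerkinProj W) (w : V)‖ ≤ Ca * h * n1 w)
    -- (ii) the smoothing bound on `K (I + K)⁻¹`, whose range lies in `V₁`
    (hsmooth : ∀ v : V, ∃ w : V₁, (w : V) = (K ∘L J) v ∧ n1 w ≤ Cop * ‖v‖)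
    (hsmall : Ca * h * Cop ≤ 1 / 2) :
    ∃ Q : V →L[ℂ] V, (1 + galerkinProj W ∘L K) ∘L Q = 1 ∧
      Q ∘L (1 + galerkinProj W ∘L K) = 1 ∧
      ∀ f : V, ∃ vN : V, vN ∈ W ∧
        (1 + galerkinProj W ∘L K) vN = galerkinProj W f ∧
        (∀ w ∈ W, (1 + galerkinProj W ∘L K) w = galerkinProj W f → w = vN) ∧
        ‖J f - vN‖ ≤ 2 * ‖J‖ * Metric.infDist (J f) (W : Set V) := by
  set P : V →L[ℂ] V := galerkinProj W with hP
  set S : V →L[ℂ] V := ((1 : V →L[ℂ] V) - P) ∘L (K ∘L J) with hS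
  -- pointwise bound for S
  have hSpt : ∀ x : V, ‖S x‖ ≤ (1 / 2) * ‖x‖ := by
    intro x
    obtain ⟨w, hw, hwn⟩ := hsmooth x
    have h1 : S x = ((1 : V →L[ℂ] V) - P) (w : V) := by
      simp [hS, hw]
    rw [h1]
    calc ‖((1 : V →L[ℂ] V) - P) (w : V)‖ ≤ Ca * h * n1 w := happrox w
      _ ≤ Ca * h * (Cop * ‖x‖) := by
          exact mul_le_mul_of_nonneg_left hwn (by positivity)
      _ = (Ca * h * Cop) * ‖x‖ := by ring
      _ ≤ (1 / 2) * ‖x‖ := mul_le_mul_of_nonneg_right hsmall (norm_nonneg _)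
  have hSnorm : ‖S‖ ≤ 1 / 2 := opNorm_le_bound _ (by norm_num) hSpt
  have hSlt : ‖S‖ < 1 := lt_of_le_of_lt hSnorm (by norm_num)
  -- units
  let U1 : (V →L[ℂ] V)ˣ := ⟨1 + K, J, hJ1, hJ2⟩
  let U2 : (V →L[ℂ] V)ˣ := Units.oneSub S hSlt
  -- (1 - S) * (1 + K) = 1 + P ∘L K
  have hJ2' : J * (1 + K) = 1 := hJ2
  have hfact : (1 - S) * (1 + K) = 1 + P ∘L K := by
    have hS1K : S * (1 + K) = ((1 : V →L[ℂ] V) - P) * K := by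
      show (((1 : V →L[ℂ] V) - P) * (K * J)) * (1 + K) = _
      rw [mul_assoc, mul_assoc, hJ2', mul_one]
    rw [sub_mul, one_mul, hS1K, sub_mul, one_mul]
    show 1 + K - (K - P * K) = 1 + P * K
    abel
  let U : (V →L[ℂ] V)ˣ := U2 * U1
  have hUval : (U : V →L[ℂ] V) = 1 + P ∘L K := by
    show ((Units.oneSub S hSlt : (V →L[ℂ] V)ˣ) : V →L[ℂ] V) * (1 + K) = 1 + P ∘L K
    rw [Units.val_oneSub]; exact hfact
  set Q : V →L[ℂ] V := ((U⁻¹ : (V →L[ℂ] V)ˣ) : V →L[ℂ] V) with hQ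
  have hQ1 : (1 + P ∘L K) ∘L Q = 1 := by
    show (1 + P ∘L K) * Q = 1
    rw [← hUval, hQ, U.mul_inv]
  have hQ2 : Q ∘L (1 + P ∘L K) = 1 := by
    show Q * (1 + P ∘L K) = 1
    rw [← hUval, hQ, U.inv_mul]
  have hQ1' : ∀ x : V, (1 + P ∘L K) (Q x) = x := by
    intro x
    have := DFunLike.congr_fun hQ1 x
    simpa using this
  have hQ2' : ∀ x : V, Q ((1 + P ∘L K) x) = x := by
    intro x
    have := DFunLike.congr_fun hQ2 x
    simpa using this
  refine ⟨Q, hQ1, hQ2, fun f => ?_⟩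
  set v : V := J f with hv
  set vN : V := Q (P f) with hvN
  have hPmem : ∀ x : V, P x ∈ W := fun x => (W.orthogonalProjection x).2
  have hTvN : (1 + P ∘L K) vN = P f := hQ1' (P f)
  have hvNW : vN ∈ W := by
    have : vN = P f - P (K vN) := by
      have h' := hTvN
      simp only [add_apply, one_apply, coe_comp', Function.comp_apply] at h'
      exact eq_sub_of_add_eq h'
    rw [this]
    exact sub_mem (hPmem f) (hPmem _)
  refine ⟨vN, hvNW, hTvN, ?_, ?_⟩
  · intro w _ hw
    have : Q ((1 + P ∘L K) w) = Q (P f) := by rw [hw]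
    rwa [hQ2' w] at this
  · -- the estimate
    have hKv : K v = f - v := by
      have := DFunLike.congr_fun hJ1 f
      simp only [coe_comp', Function.comp_apply, one_apply_eq_self, add_apply] at this
      rw [← hv] at this
      linear_combination (norm := abel) this
    have hTv : (1 + P ∘L K) v = v - P v + P f := by
      simp only [add_apply, one_apply_eq_self, coe_comp', Function.comp_apply, hKv, map_sub]
      abel
    -- v - vN = Q ((1 - P) v)
    have hdiff : v - vN = Q (v - P v) := by
      have h1 : (1 + P ∘L K) v - (1 + P ∘L K) vN = v - P v := by
        rw [hTv, hTvN]; abel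
      have h2 : v - vN = Q ((1 + P ∘L K) v - (1 + P ∘L K) vN) := by
        rw [map_sub, hQ2', hQ2']
      rw [h2, h1]
    -- u = (1-S)⁻¹ (v - P v)
    set u : V := ((U2⁻¹ : (V →L[ℂ] V)ˣ) : V →L[ℂ] V) (v - P v) with hu
    have hQeq : Q = J ∘L ((U2⁻¹ : (V →L[ℂ] V)ˣ) : V →L[ℂ] V) := by
      show Q = J * ((U2⁻¹ : (V →L[ℂ] V)ˣ) : V →L[ℂ] V)
      rw [hQ]
      show ((U2 * U1)⁻¹ : (V →L[ℂ] V)ˣ).val = _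
      rw [mul_inv_rev]
      rfl
    have hvu : v - vN = J u := by
      rw [hdiff, hQeq]; rfl
    have hSu : (1 - S) u = v - P v := by
      have := DFunLike.congr_fun U2.mul_inv (v - P v)
      rw [Units.val_oneSub] at this
      simpa [hu] using this
    have hueq : u = (v - P v) + S u := by
      have h' : u - S u = v - P v := by
        simpa [sub_apply] using hSu
      exact eq_add_of_sub_eq h'
    have hun : ‖u‖ ≤ 2 * ‖v - P v‖ := by
      have h1 : ‖u‖ ≤ ‖v - P v‖ + ‖S u‖ := by
        conv_lhs => rw [hueq]
        exact norm_add_le _ _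
      have h2 : ‖S u‖ ≤ (1 / 2) * ‖u‖ := hSpt u
      nlinarith [norm_nonneg u, norm_nonneg (v - P v)]
    -- ‖v - P v‖ ≤ infDist v W
    have hWne : (W : Set V).Nonempty := ⟨0, W.zero_mem⟩
    have hmin : ‖v - P v‖ ≤ Metric.infDist v (W : Set V) := by
      haveI : Nonempty (W : Set V) := ⟨⟨0, W.zero_mem⟩⟩
      rw [Metric.infDist_eq_iInf]
      apply le_ciInf
      intro y
      rw [dist_eq_norm]
      have hPv : P v = W.starProjection v := rfl
      rw [hPv, Submodule.starProjection_minimal v]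
      have hbdd : BddBelow (Set.range fun x : W => ‖v - (x : V)‖) :=
        ⟨0, by rintro _ ⟨x, rfl⟩; exact norm_nonneg _⟩
      exact ciInf_le hbdd ⟨y, y.2⟩
    have hJu : ‖J u‖ ≤ ‖J‖ * ‖u‖ := le_opNorm J u
    rw [hvu]
    calc ‖J u‖ ≤ ‖J‖ * ‖u‖ := hJu
      _ ≤ ‖J‖ * (2 * ‖v - P v‖) :=
          mul_le_mul_of_nonneg_left hun (norm_nonneg J)
      _ = 2 * ‖J‖ * ‖v - P v‖ := by ring
      _ ≤ 2 * ‖J‖ * Metric.infDist v (W : Set V) := by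
          exact mul_le_mul_of_nonneg_left hmin (by positivity)
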